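/- arXiv:1410.5570 — 6 statements merged into one kernel-verified Lean document; each statement's English description precedes it below -/
import Mathlib

section
/- For every Banach space X, the parameter of uniform non-squareness of the dual is at most that of the space: α(X*) ≤ α(X), where α(Y) = 2 - sup{(‖u+v‖+‖u-v‖)/2 : u,v ∈ B_Y}. -/
/-- The parameter of uniform non-squareness of a normed space. -/
noncomputable def unsqParam (X : Type*) [NormedAddCommGroup X] [NormedSpace ℝ X] : ℝ :=
  2 - sSup {r : ℝ | ∃ u v : X, ‖u‖ ≤ 1 ∧ ‖v‖ ≤ 1 ∧ r = (‖u + v‖ + ‖u - v‖) / 2}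

theorem unsqParam_dual_le (X : Type*) [NormedAddCommGroup X] [NormedSpace ℝ X]
    [CompleteSpace X] [Nontrivial X] :
    unsqParam (X →L[ℝ] ℝ) ≤ unsqParam X := by
  unfold unsqParam
  have hS : ∀ (Y : Type _) [NormedAddCommGroup Y] [NormedSpace ℝ Y],
      ∀ r ∈ {r : ℝ | ∃ u v : Y, ‖u‖ ≤ 1 ∧ ‖v‖ ≤ 1 ∧ r = (‖u + v‖ + ‖u - v‖) / 2}, r ≤ 2 := by
    intro Y _ _ r hr
    obtain ⟨u, v, hu, hv, rfl⟩ := hr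
    have h1 : ‖u + v‖ ≤ 2 := (norm_add_le u v).trans (by linarith)
    have h2 : ‖u - v‖ ≤ 2 := (norm_sub_le u v).trans (by linarith)
    linarith
  have hbdd : BddAbove {r : ℝ | ∃ u v : (X →L[ℝ] ℝ), ‖u‖ ≤ 1 ∧ ‖v‖ ≤ 1 ∧
      r = (‖u + v‖ + ‖u - v‖) / 2} := ⟨2, fun r hr => hS _ r hr⟩
  have hne : ({r : ℝ | ∃ u v : X, ‖u‖ ≤ 1 ∧ ‖v‖ ≤ 1 ∧ r = (‖u + v‖ + ‖u - v‖) / 2}).Nonempty :=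
    ⟨(‖(0 : X) + 0‖ + ‖(0 : X) - 0‖) / 2, 0, 0, by simp, by simp, rfl⟩
  have key : sSup {r : ℝ | ∃ u v : X, ‖u‖ ≤ 1 ∧ ‖v‖ ≤ 1 ∧ r = (‖u + v‖ + ‖u - v‖) / 2} ≤
      sSup {r : ℝ | ∃ u v : (X →L[ℝ] ℝ), ‖u‖ ≤ 1 ∧ ‖v‖ ≤ 1 ∧ r = (‖u + v‖ + ‖u - v‖) / 2} := by
    apply csSup_le hne
    rintro r ⟨u, v, hu, hv, rfl⟩
    obtain ⟨f, hf1, hf2⟩ := exists_dual_vector' ℝ (u + v)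
    obtain ⟨g, hg1, hg2⟩ := exists_dual_vector' ℝ (u - v)
    have hfg : ‖u + v‖ + ‖u - v‖ ≤ ‖f + g‖ + ‖f - g‖ := by
      have h1 : (f + g) u ≤ ‖f + g‖ := by
        calc (f + g) u ≤ ‖(f + g) u‖ := le_abs_self _
          _ ≤ ‖f + g‖ * ‖u‖ := (f + g).le_opNorm u
          _ ≤ ‖f + g‖ * 1 := by
              exact mul_le_mul_of_nonneg_left hu (norm_nonneg _)
          _ = ‖f + g‖ := mul_one _
      have h2 : (f - g) v ≤ ‖f - g‖ := by
        calc (f - g) v ≤ ‖(f - g) v‖ := le_abs_self _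
          _ ≤ ‖f - g‖ * ‖v‖ := (f - g).le_opNorm v
          _ ≤ ‖f - g‖ * 1 := by
              exact mul_le_mul_of_nonneg_left hv (norm_nonneg _)
          _ = ‖f - g‖ := mul_one _
      have hsum : (f + g) u + (f - g) v = ‖u + v‖ + ‖u - v‖ := by
        have := hf2; have := hg2
        simp only [ContinuousLinearMap.add_apply, ContinuousLinearMap.sub_apply]
        have e1 : f u + f v = ‖u + v‖ := by rw [← map_add]; exact_mod_cast hf2
        have e2 : g u - g v = ‖u - v‖ := by rw [← map_sub]; exact_mod_cast hg2
        linarith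
      linarith
    have hmem : (‖f + g‖ + ‖f - g‖) / 2 ∈ {r : ℝ | ∃ u v : (X →L[ℝ] ℝ), ‖u‖ ≤ 1 ∧ ‖v‖ ≤ 1 ∧
        r = (‖u + v‖ + ‖u - v‖) / 2} := ⟨f, g, le_of_eq hf1, le_of_eq hg1, rfl⟩
    have := le_csSup hbdd hmem
    linarith
  linarith
end

section
/- The parameter of uniform non-squareness is self-dual: for every Banach space X, α(X) = α(X*). -/
lemma unsq_bdd (X : Type*) [NormedAddCommGroup X] [NormedSpace ℝ X] :
    BddAbove {r : ℝ | ∃ u v : X, ‖u‖ ≤ 1 ∧ ‖v‖ ≤ 1 ∧ r = (‖u + v‖ + ‖u - v‖) / 2} := by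
  refine ⟨2, ?_⟩
  rintro r ⟨u, v, hu, hv, rfl⟩
  have h1 : ‖u + v‖ ≤ 2 := (norm_add_le u v).trans (by linarith)
  have h2 : ‖u - v‖ ≤ 2 := (norm_sub_le u v).trans (by linarith)
  linarith

lemma unsq_ne (X : Type*) [NormedAddCommGroup X] [NormedSpace ℝ X] :
    {r : ℝ | ∃ u v : X, ‖u‖ ≤ 1 ∧ ‖v‖ ≤ 1 ∧ r = (‖u + v‖ + ‖u - v‖) / 2}.Nonempty :=
  ⟨0, 0, 0, by simp⟩

theorem unsqParam_self_dual (X : Type*) [NormedAddCommGroup X] [NormedSpace ℝ X]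
    [CompleteSpace X] [Nontrivial X] :
    unsqParam X = unsqParam (X →L[ℝ] ℝ) := by
  unfold unsqParam
  have key : sSup {r : ℝ | ∃ u v : X, ‖u‖ ≤ 1 ∧ ‖v‖ ≤ 1 ∧ r = (‖u + v‖ + ‖u - v‖) / 2}
      = sSup {r : ℝ | ∃ u v : X →L[ℝ] ℝ, ‖u‖ ≤ 1 ∧ ‖v‖ ≤ 1 ∧ r = (‖u + v‖ + ‖u - v‖) / 2} := by
    apply le_antisymm
    · -- Hahn-Banach direction
      apply csSup_le (unsq_ne X)
      rintro r ⟨u, v, hu, hv, rfl⟩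
      obtain ⟨f, hf1, hf⟩ := exists_dual_vector' ℝ (u + v)
      obtain ⟨g, hg1, hg⟩ := exists_dual_vector' ℝ (u - v)
      have hfr : f (u + v) = ‖u + v‖ := by exact_mod_cast hf
      have hgr : g (u - v) = ‖u - v‖ := by exact_mod_cast hg
      have hmem : (‖f + g‖ + ‖f - g‖) / 2 ∈
          {r : ℝ | ∃ u v : X →L[ℝ] ℝ, ‖u‖ ≤ 1 ∧ ‖v‖ ≤ 1 ∧ r = (‖u + v‖ + ‖u - v‖) / 2} :=
        ⟨f, g, le_of_eq hf1, le_of_eq hg1, rfl⟩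
      apply le_csSup_of_le (unsq_bdd _) hmem
      have h1 : (f + g) u ≤ ‖f + g‖ := by
        calc (f + g) u ≤ ‖(f + g) u‖ := le_abs_self _
          _ ≤ ‖f + g‖ * ‖u‖ := (f + g).le_opNorm u
          _ ≤ ‖f + g‖ * 1 := by
              exact mul_le_mul_of_nonneg_left hu (norm_nonneg _)
          _ = ‖f + g‖ := mul_one _
      have h2 : (f - g) v ≤ ‖f - g‖ := by
        calc (f - g) v ≤ ‖(f - g) v‖ := le_abs_self _
          _ ≤ ‖f - g‖ * ‖v‖ := (f - g).le_opNorm v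
          _ ≤ ‖f - g‖ * 1 := mul_le_mul_of_nonneg_left hv (norm_nonneg _)
          _ = ‖f - g‖ := mul_one _
      have hsum : ‖u + v‖ + ‖u - v‖ = (f + g) u + (f - g) v := by
        rw [← hfr, ← hgr]
        simp only [ContinuousLinearMap.add_apply, ContinuousLinearMap.sub_apply,
          map_add, map_sub]
        ring
      linarith
    · -- approximate norm attainment direction
      apply csSup_le (unsq_ne _)
      rintro r ⟨f, g, hf, hg, rfl⟩
      apply le_of_forall_pos_le_add
      intro ε hε
      have hfg : ‖f + g‖ - ε < ‖f + g‖ := by linarith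
      have hfg' : ‖f - g‖ - ε < ‖f - g‖ := by linarith
      obtain ⟨x, hx1, hx2⟩ := (f + g).exists_lt_apply_of_lt_opNorm hfg
      obtain ⟨y, hy1, hy2⟩ := (f - g).exists_lt_apply_of_lt_opNorm hfg'
      set u : X := if 0 ≤ (f + g) x then x else -x with hu_def
      set v : X := if 0 ≤ (f - g) y then y else -y with hv_def
      have hu : ‖u‖ ≤ 1 := by
        rw [hu_def]; split_ifs
        · linarith
        · rw [norm_neg]; linarith
      have hv : ‖v‖ ≤ 1 := by
        rw [hv_def]; split_ifs
        · linarith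
        · rw [norm_neg]; linarith
      have hux : (f + g) u = ‖(f + g) x‖ := by
        rw [hu_def, Real.norm_eq_abs]
        split_ifs with h
        · rw [abs_of_nonneg h]
        · rw [map_neg, abs_of_neg (lt_of_not_ge h)]
      have hvy : (f - g) v = ‖(f - g) y‖ := by
        rw [hv_def, Real.norm_eq_abs]
        split_ifs with h
        · rw [abs_of_nonneg h]
        · rw [map_neg, abs_of_neg (lt_of_not_ge h)]
      have h1 : ‖f + g‖ - ε < (f + g) u := by rw [hux]; exact hx2
      have h2 : ‖f - g‖ - ε < (f - g) v := by rw [hvy]; exact hy2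
      have h3 : f (u + v) ≤ ‖u + v‖ := by
        calc f (u + v) ≤ ‖f (u + v)‖ := le_abs_self _
          _ ≤ ‖f‖ * ‖u + v‖ := f.le_opNorm _
          _ ≤ 1 * ‖u + v‖ := mul_le_mul_of_nonneg_right hf (norm_nonneg _)
          _ = ‖u + v‖ := one_mul _
      have h4 : g (u - v) ≤ ‖u - v‖ := by
        calc g (u - v) ≤ ‖g (u - v)‖ := le_abs_self _
          _ ≤ ‖g‖ * ‖u - v‖ := g.le_opNorm _
          _ ≤ 1 * ‖u - v‖ := mul_le_mul_of_nonneg_right hg (norm_nonneg _)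
          _ = ‖u - v‖ := one_mul _
      have hsum : (f + g) u + (f - g) v = f (u + v) + g (u - v) := by
        simp only [ContinuousLinearMap.add_apply, ContinuousLinearMap.sub_apply,
          map_add, map_sub]
        ring
      have hmem : (‖u + v‖ + ‖u - v‖) / 2 ∈
          {r : ℝ | ∃ u v : X, ‖u‖ ≤ 1 ∧ ‖v‖ ≤ 1 ∧ r = (‖u + v‖ + ‖u - v‖) / 2} :=
        ⟨u, v, hu, hv, rfl⟩
      have hle := le_csSup (unsq_bdd X) hmem
      linarith
  exact congrArg (fun t => 2 - t) key
end

section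
/- In the real space X = ℓ∞², if δ ≥ 1+θ² and μ ≥ θ (with δ ∈ (0,2), μ,θ ∈ [0,1], μθ > 1-δ), the pair x = (μ,-θ), x* = (0,θ) satisfies ‖x‖_∞ = μ, ‖x*‖_1 = θ, x*(x) = -θ² ≥ 1-δ, and d_∞((x,x*),Π(X)) ≥ 1+θ. -/
/-- Π(ℓ∞²): pairs ((a,b),(c,d)) with max(|a|,|b|)=1, |c|+|d|=1 and ac+bd=1, where the
space is ℝ² with the sup norm and the dual is ℝ² with the ℓ¹ norm. -/
def PiLinf : Set ((ℝ × ℝ) × (ℝ × ℝ)) :=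
  {p | max |p.1.1| |p.1.2| = 1 ∧ |p.2.1| + |p.2.2| = 1 ∧ p.1.1 * p.2.1 + p.1.2 * p.2.2 = 1}

/-- The d_∞ distance from a pair (x, x*) to Π(ℓ∞²). -/
noncomputable def dInfLinf (x xs : ℝ × ℝ) : ℝ :=
  sInf {r : ℝ | ∃ p ∈ PiLinf,
    r = max (max |x.1 - p.1.1| |x.2 - p.1.2|) (|xs.1 - p.2.1| + |xs.2 - p.2.2|)}

theorem linf_sharp_example_case2 (δ μ θ : ℝ) (hδ : δ ∈ Set.Ioo (0:ℝ) 2)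
    (hμ : μ ∈ Set.Icc (0:ℝ) 1) (hθ : θ ∈ Set.Icc (0:ℝ) 1) (h : μ * θ > 1 - δ)
    (hδθ : δ ≥ 1 + θ^2) (hμθ : μ ≥ θ) :
    ∀ x xs : ℝ × ℝ, x = (μ, -θ) → xs = (0, θ) →
      max |x.1| |x.2| = μ ∧ |xs.1| + |xs.2| = θ ∧
      xs.1 * x.1 + xs.2 * x.2 = -θ^2 ∧ -θ^2 ≥ 1 - δ ∧
      dInfLinf x xs ≥ 1 + θ := by
  obtain ⟨hδ0, hδ2⟩ := hδ
  obtain ⟨hμ0, hμ1⟩ := hμ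
  obtain ⟨hθ0, hθ1⟩ := hθ
  rintro x xs rfl rfl
  refine ⟨?_, ?_, by ring, by nlinarith, ?_⟩
  · simp only [abs_of_nonneg hμ0, abs_neg, abs_of_nonneg hθ0]
    exact max_eq_left hμθ
  · simp [abs_of_nonneg hθ0]
  · unfold dInfLinf
    apply le_csInf
    · exact ⟨max (max |μ - 1| |(-θ:ℝ) - 1|) (|(0:ℝ) - 1| + |θ - 0|),
        ((1, 1), (1, 0)), ⟨by norm_num, by norm_num, by norm_num⟩, rfl⟩
    · rintro r ⟨⟨⟨a, b⟩, ⟨c, d⟩⟩, ⟨hab, hcd, hsum⟩, rfl⟩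
      simp only [PiLinf, Set.mem_setOf_eq] at *
      have ha : |a| ≤ 1 := hab ▸ le_max_left |a| |b|
      have hb : |b| ≤ 1 := hab ▸ le_max_right |a| |b|
      have hac : a * c ≤ |c| := by
        nlinarith [le_abs_self (a * c), abs_mul a c, abs_nonneg c, abs_nonneg a]
      have hbd : b * d ≤ |d| := by
        nlinarith [le_abs_self (b * d), abs_mul b d, abs_nonneg d, abs_nonneg b]
      have hac' : a * c = |c| := by linarith
      have hbd' : b * d = |d| := by linarith
      rcases lt_trichotomy d 0 with hd | hd | hd
      · -- d < 0 : b = -1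
        have hb1 : b = -1 := by
          have : (b + 1) * d = 0 := by rw [abs_of_neg hd] at hbd'; linarith
          rcases mul_eq_zero.1 this with h' | h'
          · linarith
          · exact absurd h' (ne_of_lt hd)
        have h1 : |θ - d| = θ - d := abs_of_nonneg (by linarith)
        have h2 : |c| = 1 + d := by rw [abs_of_neg hd] at hcd; linarith
        refine le_trans ?_ (le_max_right _ _)
        have h3 : |0 - c| = |c| := by simp
        rw [h1, h3, h2]; linarith
      · -- d = 0 : |c| = 1
        subst hd
        have hc : |c| = 1 := by simpa using hcd
        rcases abs_eq (by norm_num : (0:ℝ) ≤ 1) |>.1 hc with hc1 | hc1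
        · refine le_trans ?_ (le_max_right _ _)
          rw [hc1]
          rw [show |(0:ℝ) - 1| = 1 by norm_num, show |θ - 0| = θ by simpa using abs_of_nonneg hθ0]
        · have hac1 : a = -1 := by rw [hc1] at hac'; simp at hac'; linarith
          refine le_trans ?_ ((le_max_left _ _).trans (le_max_left _ _))
          rw [hac1, show μ - -1 = μ + 1 by ring, abs_of_nonneg (by linarith)]
          linarith
      · -- d > 0 : b = 1
        have hb1 : b = 1 := by
          have : (b - 1) * d = 0 := by rw [abs_of_pos hd] at hbd'; linarith
          rcases mul_eq_zero.1 this with h' | h'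
          · linarith
          · exact absurd h' (ne_of_gt hd)
        refine le_trans ?_ ((le_max_right _ _).trans (le_max_left _ _))
        rw [hb1, show -θ - 1 = -(θ + 1) by ring, abs_neg, abs_of_nonneg (by linarith)]
        linarith
end

section
/- Let δ ∈ (0,2) and x, x* ∈ ℝ with |x| ≤ 1, |x*| ≤ 1 and x*·x > 1-δ. Then d_∞((x,x*),Π(ℝ)) ≤ 1 - min{|x|,|x*|} if δ ≤ 1, and d_∞((x,x*),Π(ℝ)) ≤ 1 + min{|x|,|x*|} if 1 ≤ δ < 2, where Π(ℝ) = {(1,1),(-1,-1)}. -/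
/-- The d_∞ distance from (x, x*) ∈ ℝ × ℝ to Π(ℝ) = {(1,1),(-1,-1)}. -/
noncomputable def dInfR (x xs : ℝ) : ℝ :=
  min (max |x - 1| |xs - 1|) (max |x + 1| |xs + 1|)

theorem dInfR_bound (δ x xs : ℝ) (hδ : δ ∈ Set.Ioo (0:ℝ) 2)
    (hx : |x| ≤ 1) (hxs : |xs| ≤ 1) (h : xs * x > 1 - δ) :
    (δ ≤ 1 → dInfR x xs ≤ 1 - min |x| |xs|) ∧
    (1 ≤ δ → dInfR x xs ≤ 1 + min |x| |xs|) := by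
  obtain ⟨hx1, hx2⟩ := abs_le.mp hx
  obtain ⟨hxs1, hxs2⟩ := abs_le.mp hxs
  have e1 : |x - 1| = 1 - x := by rw [abs_of_nonpos (by linarith)]; ring
  have e2 : |xs - 1| = 1 - xs := by rw [abs_of_nonpos (by linarith)]; ring
  have e3 : |x + 1| = x + 1 := abs_of_nonneg (by linarith)
  have e4 : |xs + 1| = xs + 1 := abs_of_nonneg (by linarith)
  constructor
  · intro hδ1
    have hpos : xs * x > 0 := by linarith
    rcases le_or_gt 0 x with hx0 | hx0 <;> rcases le_or_gt 0 xs with hxs0 | hxs0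
    · rw [abs_of_nonneg hx0, abs_of_nonneg hxs0]
      unfold dInfR
      rw [e1, e2, e3, e4]
      rcases le_total x xs with hc | hc <;>
        simp only [min_le_iff, max_le_iff, min_eq_left hc, min_eq_right hc] <;>
        left <;> constructor <;> linarith
    · nlinarith
    · nlinarith
    · rw [abs_of_neg hx0, abs_of_neg hxs0]
      unfold dInfR
      rw [e1, e2, e3, e4]
      rcases le_total (-x) (-xs) with hc | hc <;>
        simp only [min_le_iff, max_le_iff, min_eq_left hc, min_eq_right hc] <;>
        right <;> constructor <;> linarith
  · intro _
    unfold dInfR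
    rw [e1, e2, e3, e4]
    rcases le_or_gt 0 x with hx0 | hx0 <;> rcases le_or_gt 0 xs with hxs0 | hxs0
    · refine le_trans (min_le_left _ _) (max_le ?_ ?_) <;>
        nlinarith [le_min (abs_nonneg x) (abs_nonneg xs)]
    · rw [abs_of_nonneg hx0, abs_of_neg hxs0]
      rcases le_total x (-xs) with hc | hc
      · rw [min_eq_left hc]
        exact le_trans (min_le_right _ _) (max_le (by linarith) (by linarith))
      · rw [min_eq_right hc]
        exact le_trans (min_le_left _ _) (max_le (by linarith) (by linarith))
    · rw [abs_of_neg hx0, abs_of_nonneg hxs0]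
      rcases le_total (-x) xs with hc | hc
      · rw [min_eq_left hc]
        exact le_trans (min_le_left _ _) (max_le (by linarith) (by linarith))
      · rw [min_eq_right hc]
        exact le_trans (min_le_right _ _) (max_le (by linarith) (by linarith))
    · refine le_trans (min_le_right _ _) (max_le ?_ ?_) <;>
        nlinarith [le_min (abs_nonneg x) (abs_nonneg xs)]
end

section
/- Let H be a real Hilbert space, and let x, y ∈ B_H with ‖x‖ ≥ ‖y‖, y ≠ 0, and ⟨x,y⟩ ≥ ‖y‖² + ‖y‖(‖x‖²-‖y‖²)/2. Then with ỹ = y/‖y‖ one has ‖y - ỹ‖ ≥ ‖x - ỹ‖, and consequently d_∞((x,y),Π(H)) = 1 - ‖y‖, where Π(H) = {(z,z) : z ∈ S_H}. -/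
/-! Write `ỹ = ‖y‖⁻¹ • y`. Expanding the square, `‖x - ỹ‖² = ‖x‖² + 1 - 2⟪x, y⟫/‖y‖`, and the
hypothesis on `⟪x, y⟫` bounds this by `(1 - ‖y‖)² = ‖y - ỹ‖²`. For every unit vector `z` we have
`‖y - z‖ ≥ 1 - ‖y‖`, so `1 - ‖y‖` is a lower bound for `max ‖x - z‖ ‖y - z‖`, attained at `z = ỹ`. -/

section

variable {E : Type*} [NormedAddCommGroup E]

lemma norm_inv_norm_smul_self [NormedSpace ℝ E] {y : E} (hy0 : y ≠ 0) : ‖‖y‖⁻¹ • y‖ = 1 := by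
  rw [norm_smul, norm_inv, norm_norm, inv_mul_cancel₀ (norm_ne_zero_iff.mpr hy0)]

lemma norm_sub_inv_norm_smul_self [NormedSpace ℝ E] {y : E} (hy0 : y ≠ 0) :
    ‖y - ‖y‖⁻¹ • y‖ = |1 - ‖y‖| := by
  have hy : ‖y‖ ≠ 0 := norm_ne_zero_iff.mpr hy0
  calc ‖y - ‖y‖⁻¹ • y‖ = |1 - ‖y‖⁻¹| * ‖y‖ := by
        rw [← Real.norm_eq_abs, ← norm_smul, sub_smul, one_smul]
    _ = |1 - ‖y‖| := by
        rw [← abs_norm y, ← abs_mul, abs_norm, sub_mul, inv_mul_cancel₀ hy, one_mul, abs_sub_comm]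

lemma one_sub_norm_le_norm_sub_of_norm_eq_one (y : E) {z : E} (hz : ‖z‖ = 1) :
    1 - ‖y‖ ≤ ‖y - z‖ := by
  simpa [hz, norm_sub_rev] using norm_sub_norm_le z y

variable [InnerProductSpace ℝ E]

lemma norm_sub_inv_norm_smul_sq {y : E} (hy0 : y ≠ 0) (x : E) :
    ‖x - ‖y‖⁻¹ • y‖ ^ 2 = ‖x‖ ^ 2 + 1 - 2 * (‖y‖⁻¹ * inner ℝ x y) := by
  rw [norm_sub_sq_real, real_inner_smul_right, norm_inv_norm_smul_self hy0]
  ring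

lemma norm_sub_inv_norm_smul_le {x y : E} (hy0 : y ≠ 0) (hy : ‖y‖ ≤ 1)
    (hinner : inner ℝ x y ≥ ‖y‖ ^ 2 + ‖y‖ * (‖x‖ ^ 2 - ‖y‖ ^ 2) / 2) :
    ‖x - ‖y‖⁻¹ • y‖ ≤ 1 - ‖y‖ := by
  have hpos : 0 < ‖y‖ := norm_pos_iff.mpr hy0
  have hscaled : ‖y‖ + (‖x‖ ^ 2 - ‖y‖ ^ 2) / 2 ≤ ‖y‖⁻¹ * inner ℝ x y := by
    rw [le_inv_mul_iff₀ hpos]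
    linarith
  rw [← pow_le_pow_iff_left₀ (norm_nonneg _) (sub_nonneg.mpr hy) two_ne_zero,
    norm_sub_inv_norm_smul_sq hy0]
  nlinarith

end

theorem dist_to_Pi_first_case_general (H : Type*) [NormedAddCommGroup H] [InnerProductSpace ℝ H]
    (x y : H) (hy : ‖y‖ ≤ 1)
    (hy0 : y ≠ 0)
    (hinner : inner ℝ x y ≥ ‖y‖^2 + ‖y‖ * (‖x‖^2 - ‖y‖^2) / 2) :
    ‖y - ‖y‖⁻¹ • y‖ ≥ ‖x - ‖y‖⁻¹ • y‖ ∧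
    sInf {r : ℝ | ∃ z : H, ‖z‖ = 1 ∧ r = max ‖x - z‖ ‖y - z‖} = 1 - ‖y‖ := by
  have hyy : ‖y - ‖y‖⁻¹ • y‖ = 1 - ‖y‖ := by
    rw [norm_sub_inv_norm_smul_self hy0, abs_of_nonneg (sub_nonneg.mpr hy)]
  have hx_closer : ‖x - ‖y‖⁻¹ • y‖ ≤ ‖y - ‖y‖⁻¹ • y‖ :=
    hyy ▸ norm_sub_inv_norm_smul_le hy0 hy hinner
  refine ⟨hx_closer, IsLeast.csInf_eq ⟨?_, ?_⟩⟩
  · exact ⟨‖y‖⁻¹ • y, norm_inv_norm_smul_self hy0, by rw [max_eq_right hx_closer, hyy]⟩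
  · rintro r ⟨z, hz, rfl⟩
    exact (one_sub_norm_le_norm_sub_of_norm_eq_one y hz).trans (le_max_right _ _)

theorem dist_to_Pi_first_case (H : Type*) [NormedAddCommGroup H] [InnerProductSpace ℝ H]
    [CompleteSpace H] (x y : H) (hx : ‖x‖ ≤ 1) (hy : ‖y‖ ≤ 1) (hxy : ‖y‖ ≤ ‖x‖)
    (hy0 : y ≠ 0)
    (hinner : inner ℝ x y ≥ ‖y‖^2 + ‖y‖ * (‖x‖^2 - ‖y‖^2) / 2) :
    ‖y - ‖y‖⁻¹ • y‖ ≥ ‖x - ‖y‖⁻¹ • y‖ ∧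
    sInf {r : ℝ | ∃ z : H, ‖z‖ = 1 ∧ r = max ‖x - z‖ ‖y - z‖} = 1 - ‖y‖ :=
  dist_to_Pi_first_case_general H x y hy hy0 hinner
end

section
/- Let X be a Banach space with α(X*) > ᾱ > 0. For every δ ∈ (0,2), every x ∈ S_X, x* ∈ S_{X*} with Re x*(x) > 1-δ, and every k ∈ (0,1/2], there exists (y,y*) ∈ Π(X) with ‖x-y‖ ≤ δ/k and ‖x*-y*‖ ≤ 2k - (2/3)kᾱ. -/
open Set Filter Topology

section PhelpsSet

variable {M : Type*} [MetricSpace M] (φ : M → ℝ) (k : ℝ)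

/-- The upper set of `x` for the Bishop–Phelps order of `φ` with slope `k`. -/
def phelpsSet (x : M) : Set M := {z | k * dist z x ≤ φ z - φ x}

variable {φ k}

lemma self_mem_phelpsSet (x : M) : x ∈ phelpsSet φ k x := by simp [phelpsSet]

lemma phelpsSet_subset (hk : 0 ≤ k) {x w : M} (hw : w ∈ phelpsSet φ k x) :
    phelpsSet φ k w ⊆ phelpsSet φ k x := fun z hz => by
  simp only [phelpsSet, mem_ofPred_eq] at hw hz ⊢
  nlinarith [dist_triangle z w x]

lemma isClosed_phelpsSet (hφ : Continuous φ) (x : M) : IsClosed (phelpsSet φ k x) :=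
  isClosed_le (by fun_prop) (by fun_prop)

lemma exists_mem_phelpsSet_forall_le_add (hφ : BddAbove (range φ)) (x : M) {ε : ℝ}
    (hε : 0 < ε) : ∃ x' ∈ phelpsSet φ k x, ∀ z ∈ phelpsSet φ k x, φ z ≤ φ x' + ε := by
  obtain ⟨_, ⟨x', hx', rfl⟩, hlt⟩ := exists_lt_of_lt_csSup
    ((nonempty_of_mem (self_mem_phelpsSet x)).image φ) (sub_lt_self _ hε)
  refine ⟨x', hx', fun z hz => ?_⟩
  linarith [le_csSup (hφ.mono (image_subset_range _ _)) (mem_image_of_mem φ hz)]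

lemma dist_le_of_forall_le_add (hk : 0 < k) {x z : M} {r : ℝ}
    (hx : ∀ w ∈ phelpsSet φ k x, φ w ≤ φ x + k * r) (hz : z ∈ phelpsSet φ k x) :
    dist z x ≤ r :=
  le_of_mul_le_mul_left (by linarith [hx z hz, show k * dist z x ≤ φ z - φ x from hz]) hk

theorem exists_mem_phelpsSet_eq_singleton [CompleteSpace M] (hφ : Continuous φ)
    (hφb : BddAbove (range φ)) (hk : 0 < k) (x₀ : M) :
    ∃ y ∈ phelpsSet φ k x₀, phelpsSet φ k y = {y} := by
  choose next hnext_mem hnext_le using fun (n : ℕ) (x : M) =>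
    exists_mem_phelpsSet_forall_le_add (k := k) hφb x (by positivity : 0 < k * (1 / 2) ^ n)
  -- Each `x n` maximises `φ` on the previous upper set up to `k 2⁻ⁿ`, so the nested closed sets
  -- `phelpsSet φ k (x n)` lie in balls of radius `2⁻ⁿ` around `x n` and shrink to one point.
  let x : ℕ → M := fun n => Nat.rec (next 0 x₀) (fun n xn => next (n + 1) xn) n
  have hx_next : ∀ n, ∃ p, x n = next n p := fun n => by cases n <;> exact ⟨_, rfl⟩
  have hx_anti : Antitone fun n => phelpsSet φ k (x n) :=
    antitone_nat_of_succ_le fun n => phelpsSet_subset hk.le (hnext_mem (n + 1) (x n))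
  have hx_radius : ∀ n, ∀ z ∈ phelpsSet φ k (x n), dist z (x n) ≤ (1 / 2) ^ n := by
    intro n
    obtain ⟨p, hp⟩ := hx_next n
    rw [hp]
    exact fun z => dist_le_of_forall_le_add hk fun w hw =>
      hnext_le n p w (phelpsSet_subset hk.le (hnext_mem n p) hw)
  have hx_mem : ∀ n m, n ≤ m → x m ∈ phelpsSet φ k (x n) :=
    fun n m hnm => hx_anti hnm (self_mem_phelpsSet _)
  have hgeom : Tendsto (fun n : ℕ => ((1 : ℝ) / 2) ^ n) atTop (𝓝 0) :=
    tendsto_pow_atTop_nhds_zero_of_lt_one (by norm_num) (by norm_num)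
  obtain ⟨y, hy⟩ := cauchySeq_tendsto_of_complete <| cauchySeq_of_le_tendsto_0' _
    (fun n m hnm => dist_comm (x n) (x m) ▸ hx_radius n _ (hx_mem n m hnm)) hgeom
  have hy_mem : ∀ n, y ∈ phelpsSet φ k (x n) := fun n =>
    (isClosed_phelpsSet hφ _).mem_of_tendsto hy (eventually_atTop.2 ⟨n, hx_mem n⟩)
  refine ⟨y, phelpsSet_subset hk.le (hnext_mem 0 x₀) (hy_mem 0),
    eq_singleton_iff_unique_mem.2 ⟨self_mem_phelpsSet y, fun z hz => ?_⟩⟩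
  have hz : Tendsto x atTop (𝓝 z) := tendsto_iff_dist_tendsto_zero.2 <|
    squeeze_zero (fun _ => dist_nonneg) (fun n => dist_comm z (x n) ▸
      hx_radius n z (phelpsSet_subset hk.le (hy_mem n) hz)) hgeom
  exact tendsto_nhds_unique hz hy

end PhelpsSet

section NormedSpace

variable {E : Type*} [NormedAddCommGroup E]

theorem exists_mem_forall_sub_le_mul_norm_sub [CompleteSpace E] {C : Set E} (hC : IsClosed C)
    {f : E → ℝ} (hf : Continuous f) (hfC : BddAbove (f '' C)) {k : ℝ} (hk : 0 < k) {x : E}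
    (hx : x ∈ C) : ∃ y ∈ C, k * ‖y - x‖ ≤ f y - f x ∧ ∀ z ∈ C, f z - f y ≤ k * ‖z - y‖ := by
  have : CompleteSpace C := hC.completeSpace_coe
  obtain ⟨y, hxy, hy⟩ := exists_mem_phelpsSet_eq_singleton (φ := fun z : C => f z)
    (by fun_prop) (by rwa [← image_eq_range]) hk ⟨x, hx⟩
  refine ⟨y, y.2, by simpa [phelpsSet, Subtype.dist_eq, dist_eq_norm] using hxy, fun z hz => ?_⟩
  by_contra! hlt
  have hzy : (⟨z, hz⟩ : C) ∈ phelpsSet (fun z : C => f z) k y := by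
    simpa [phelpsSet, Subtype.dist_eq, dist_eq_norm] using hlt.le
  rw [hy, mem_singleton_iff] at hzy
  simp [← hzy] at hlt

variable [NormedSpace ℝ E]

theorem exists_norm_le_isMaxOn_sub {C : Set E} (hC : Convex ℝ C) {f : E →L[ℝ] ℝ} {k : ℝ}
    (hk : 0 ≤ k) {y : E} (hy : y ∈ C) (h : ∀ z ∈ C, f z - f y ≤ k * ‖z - y‖) :
    ∃ v : E →L[ℝ] ℝ, ‖v‖ ≤ k ∧ IsMaxOn (f - v) C y := by
  have hA : Convex ℝ {p : E × ℝ | k * ‖p.1 - y‖ + f y < p.2} := by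
    simpa [dist_eq_norm] using
      (((convexOn_dist y convex_univ).smul hk).add_const (f y)).convex_strict_epigraph
  have hB : Convex ℝ {p : E × ℝ | p.1 ∈ C ∧ p.2 ≤ f p.1} :=
    (f.toLinearMap.concaveOn hC).convex_hypograph
  obtain ⟨φ, s, hφA, hφB⟩ := geometric_hahn_banach_open hA
    (isOpen_lt (by fun_prop) continuous_snd) hB <| Set.disjoint_left.2 fun p hpA hpB => by
      linarith [h p.1 hpB.1, hpB.2, show k * ‖p.1 - y‖ + f y < p.2 from hpA]
  -- Writing `φ (z, r) = ψ z + r β`, the separating level `s` equals `φ (y, f y)` and `β < 0`;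
  -- then `v = ψ / (-β)` does the job.
  set β := φ (0, 1)
  set ψ := φ.comp (ContinuousLinearMap.inl ℝ E ℝ)
  have hφ : ∀ z r, φ (z, r) = ψ z + r * β := fun z r => by
    rw [show ((z, r) : E × ℝ) = (z, 0) + r • (0, 1) by simp, map_add, map_smul, smul_eq_mul]
    rfl
  have hAφ : ∀ z r, k * ‖z - y‖ + f y < r → ψ z + r * β < s := fun z r hr =>
    hφ z r ▸ hφA (z, r) hr
  have hBφ : ∀ z ∈ C, s ≤ ψ z + f z * β := fun z hz => hφ z (f z) ▸ hφB (z, f z) ⟨hz, le_rfl⟩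
  have hβ : β < 0 := by linarith [hAφ y (f y + 1) (by simp), hBφ y hy]
  have hs : ψ y + f y * β ≤ s := by
    by_contra! hlt
    have hr : (ψ y + f y * β - s) / -β * β = -(ψ y + f y * β - s) := by
      field_simp [hβ.ne]
    have := hAφ y (f y + (ψ y + f y * β - s) / -β)
      (by simpa using div_pos (by linarith) (by linarith))
    linarith
  set v : E →L[ℝ] ℝ := (-β)⁻¹ • ψ
  have hψ : ∀ w, ψ w = -β * v w := fun w => by simp [v, hβ.ne]
  have hv : ∀ w, v w ≤ k * ‖w‖ := fun w => by
    by_contra! hlt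
    have := hAφ (y + w) (f y + v w) (by simp; linarith)
    rw [map_add, hψ w] at this
    nlinarith [hBφ y hy]
  refine ⟨v, v.opNorm_le_bound hk fun w => abs_le.2 ⟨?_, hv w⟩, fun z hz => ?_⟩
  · linarith [show -v w ≤ k * ‖w‖ by simpa using hv (-w)]
  · have := hs.trans (hBφ z hz)
    rw [hψ, hψ] at this
    show f z - v z ≤ f y - v y
    nlinarith

theorem ContinuousLinearMap.norm_eq_apply_of_isMaxOn_closedBall {g : E →L[ℝ] ℝ} {y : E}
    (hy : ‖y‖ ≤ 1) (hg : IsMaxOn g (Metric.closedBall 0 1) y) : ‖g‖ = g y := by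
  have hmax : ∀ w, ‖w‖ ≤ 1 → g w ≤ g y := fun w hw => hg (mem_closedBall_zero_iff.2 hw)
  refine le_antisymm (g.opNorm_le_of_unit_norm ?_ fun w hw => abs_le.2 ⟨?_, hmax w hw.le⟩) ?_
  · simpa using hmax 0 (by simp)
  · linarith [hmax (-w) (by simp [hw]), g.map_neg w]
  · simpa using (le_abs_self (g y)).trans (g.le_opNorm_of_le hy)

theorem exists_perturbation_attaining_norm [CompleteSpace E] (f : E →L[ℝ] ℝ) {k : ℝ} (hk : 0 < k)
    {x : E} (hx : ‖x‖ ≤ 1) : ∃ y : E, ∃ v : E →L[ℝ] ℝ, ‖y‖ ≤ 1 ∧ k * ‖y - x‖ ≤ f y - f x ∧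
      ‖v‖ ≤ k ∧ ‖f - v‖ = (f - v) y := by
  obtain ⟨y, hy, hxy, hmax⟩ := exists_mem_forall_sub_le_mul_norm_sub Metric.isClosed_closedBall
    f.continuous (f.lipschitz.isBounded_image Metric.isBounded_closedBall).bddAbove hk
    (mem_closedBall_zero_iff.2 hx)
  obtain ⟨v, hv, hvmax⟩ := exists_norm_le_isMaxOn_sub (convex_closedBall 0 1) hk.le hy hmax
  rw [mem_closedBall_zero_iff] at hy
  exact ⟨y, v, hy, hxy, hv, (f - v).norm_eq_apply_of_isMaxOn_closedBall hy hvmax⟩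

end NormedSpace

section NonSquare

variable {Y : Type*} [NormedAddCommGroup Y]

lemma bddAbove_unsqParam_set :
    BddAbove {r : ℝ | ∃ u v : Y, ‖u‖ ≤ 1 ∧ ‖v‖ ≤ 1 ∧ r = (‖u + v‖ + ‖u - v‖) / 2} :=
  ⟨2, by rintro _ ⟨u, v, hu, hv, rfl⟩; linarith [norm_add_le u v, norm_sub_le u v]⟩

variable [NormedSpace ℝ Y]

lemma unsqParam_le_two : unsqParam Y ≤ 2 := by
  have := le_csSup (bddAbove_unsqParam_set (Y := Y)) (a := 0) ⟨0, 0, by simp, by simp, by simp⟩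
  rw [unsqParam]
  linarith

lemma norm_add_add_norm_sub_le {u w : Y} {r : ℝ} (hu : ‖u‖ ≤ r) (hw : ‖w‖ ≤ r) :
    ‖u + w‖ + ‖u - w‖ ≤ 2 * (2 - unsqParam Y) * r := by
  rcases ((norm_nonneg u).trans hu).eq_or_lt with rfl | hr
  · simp [norm_le_zero_iff.1 hu, norm_le_zero_iff.1 hw]
  have hunit : ∀ z : Y, ‖z‖ ≤ r → ‖r⁻¹ • z‖ ≤ 1 := fun z hz => by
    rwa [norm_smul, Real.norm_of_nonneg (inv_nonneg.2 hr.le), inv_mul_le_iff₀ hr, mul_one]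
  have := le_csSup bddAbove_unsqParam_set ⟨_, _, hunit u hu, hunit w hw, rfl⟩
  rw [← smul_add, ← smul_sub, norm_smul, norm_smul, Real.norm_of_nonneg (inv_nonneg.2 hr.le),
    ← mul_add, inv_mul_eq_div, div_div, div_le_iff₀ (by positivity)] at this
  rw [unsqParam, sub_sub_cancel]
  linarith

/- For `s ≥ 0` the hypotheses give `ε r ≤ (ε + s) (J ε - s)`, which is at most `J ε²` unless
`ε + s ≤ J ε`; the case `s ≤ 0` is symmetric. -/
lemma le_mul_of_weighted_le {ε s r A B J : ℝ} (hs : |s| ≤ ε) (hA : ε - s ≤ A) (hB : ε + s ≤ B)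
    (hAB : A + B ≤ 2 * J * ε) (h₁ : 2 * ε * r ≤ (ε + s) * A + (ε - s) * B)
    (h₂ : r ≤ ε + |s|) : r ≤ J * ε := by
  rcases abs_le.1 hs with ⟨hs₁, hs₂⟩
  rcases le_total 0 s with hs0 | hs0
  · rw [abs_of_nonneg hs0] at h₂
    have : ε * r ≤ (ε + s) * (J * ε - s) := by nlinarith
    rcases le_or_gt (ε + s) (J * ε) with h | h
    · linarith
    · nlinarith
  · rw [abs_of_nonpos hs0] at h₂
    have : ε * r ≤ (ε - s) * (J * ε + s) := by nlinarith
    rcases le_or_gt (ε - s) (J * ε) with h | h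
    · linarith
    · nlinarith

theorem norm_sub_le_of_norm_sub_smul_le {f g : Y} (hf : ‖f‖ = 1) (hg : ‖g‖ = 1) {t : ℝ}
    (ht : ‖f - t • g‖ ≤ t) : ‖f - g‖ ≤ (2 - unsqParam Y) * ‖f - t • g‖ := by
  set ε := ‖f - t • g‖
  have hε : 0 ≤ ε := norm_nonneg _
  have hnorm : ∀ c, 0 ≤ c → ‖c • g‖ = c := fun c hc => by
    rw [norm_smul, hg, mul_one, Real.norm_of_nonneg hc]
  have hs : |t - 1| ≤ ε := by
    simpa [hnorm t (hε.trans ht), hf, norm_sub_rev] using abs_norm_sub_norm_le (t • g) f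
  have hA : ε - (t - 1) ≤ ‖f - t • g + ε • g‖ := by
    have := norm_sub_norm_le f ((t - ε) • g)
    rw [hf, hnorm _ (by linarith), show f - (t - ε) • g = f - t • g + ε • g by module] at this
    linarith
  have hB : ε + (t - 1) ≤ ‖f - t • g - ε • g‖ := by
    have := norm_sub_norm_le ((t + ε) • g) f
    rw [hf, hnorm _ (by linarith), norm_sub_rev,
      show f - (t + ε) • g = f - t • g - ε • g by module] at this
    linarith
  have hAB := norm_add_add_norm_sub_le (u := f - t • g) (w := ε • g) le_rfl (hnorm ε hε).le
  have h₁ : 2 * ε * ‖f - g‖ ≤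
      (ε + (t - 1)) * ‖f - t • g + ε • g‖ + (ε - (t - 1)) * ‖f - t • g - ε • g‖ := by
    have hcomb : (2 * ε) • (f - g) =
        (ε + (t - 1)) • (f - t • g + ε • g) + (ε - (t - 1)) • (f - t • g - ε • g) := by
      module
    have := norm_add_le ((ε + (t - 1)) • (f - t • g + ε • g)) ((ε - (t - 1)) • (f - t • g - ε • g))
    rw [← hcomb, norm_smul, norm_smul, norm_smul] at this
    rwa [Real.norm_of_nonneg (by positivity), Real.norm_of_nonneg (by linarith [abs_le.1 hs]),
      Real.norm_of_nonneg (by linarith [abs_le.1 hs])] at this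
  have h₂ : ‖f - g‖ ≤ ε + |t - 1| := by
    have := norm_add_le (f - t • g) ((t - 1) • g)
    rwa [norm_smul, hg, mul_one, Real.norm_eq_abs, show f - t • g + (t - 1) • g = f - g by module]
      at this
  exact le_mul_of_weighted_le hs hA hB (by linarith) h₁ h₂

end NonSquare

theorem main_lemma_non_square_general (X : Type*) [NormedAddCommGroup X] [NormedSpace ℝ X]
    [CompleteSpace X] (α : ℝ) (hα0 : 0 < α) (hα : α < unsqParam (X →L[ℝ] ℝ))
    (δ : ℝ)
    (x : X) (f : X →L[ℝ] ℝ) (hx : ‖x‖ = 1) (hf : ‖f‖ = 1) (hfx : f x > 1 - δ)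
    (k : ℝ) (hk : k ∈ Set.Ioc (0:ℝ) (1/2)) :
    ∃ y : X, ∃ g : X →L[ℝ] ℝ, ‖y‖ = 1 ∧ ‖g‖ = 1 ∧ g y = 1 ∧
      ‖x - y‖ ≤ δ / k ∧ ‖f - g‖ ≤ 2 * k - 2/3 * k * α := by
  obtain ⟨hk0, hk2⟩ := hk
  obtain ⟨y, v, hy, hxy, hv, hg₀⟩ := exists_perturbation_attaining_norm f hk0 hx.le
  set g₀ := f - v
  have hg₀_ge : 1 - k ≤ ‖g₀‖ := by linarith [norm_sub_norm_le f v]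
  have hg₀_pos : 0 < ‖g₀‖ := by linarith
  have hy1 : ‖y‖ = 1 := by
    refine le_antisymm hy (le_of_mul_le_mul_left ?_ hg₀_pos)
    calc ‖g₀‖ * 1 = g₀ y := by rw [mul_one, hg₀]
      _ ≤ ‖g₀‖ * ‖y‖ := (le_abs_self _).trans (g₀.le_opNorm y)
  have hg : ‖‖g₀‖⁻¹ • g₀‖ = 1 := by
    rw [norm_smul, norm_inv, norm_norm, inv_mul_cancel₀ hg₀_pos.ne']
  have hfg : f - ‖g₀‖ • ‖g₀‖⁻¹ • g₀ = v := by
    rw [smul_inv_smul₀ hg₀_pos.ne']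
    exact sub_sub_cancel f v
  refine ⟨y, ‖g₀‖⁻¹ • g₀, hy1, hg, by simp [← hg₀, hg₀_pos.ne'], ?_, ?_⟩
  · have hfy : f y ≤ 1 := by simpa [hf] using (le_abs_self (f y)).trans (f.le_opNorm_of_le hy)
    rw [le_div_iff₀ hk0, norm_sub_rev]
    linarith
  · have hJ : 0 ≤ 2 - unsqParam (X →L[ℝ] ℝ) := by linarith [unsqParam_le_two (Y := X →L[ℝ] ℝ)]
    calc ‖f - ‖g₀‖⁻¹ • g₀‖ ≤ (2 - unsqParam (X →L[ℝ] ℝ)) * ‖v‖ :=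
          hfg ▸ norm_sub_le_of_norm_sub_smul_le hf hg (by rw [hfg]; linarith)
      _ ≤ (2 - α) * k := mul_le_mul (by linarith) hv (norm_nonneg v) (by linarith)
      _ ≤ 2 * k - 2 / 3 * k * α := by nlinarith

theorem main_lemma_non_square (X : Type*) [NormedAddCommGroup X] [NormedSpace ℝ X]
    [CompleteSpace X] (α : ℝ) (hα0 : 0 < α) (hα : α < unsqParam (X →L[ℝ] ℝ))
    (δ : ℝ) (hδ : δ ∈ Set.Ioo (0:ℝ) 2)
    (x : X) (f : X →L[ℝ] ℝ) (hx : ‖x‖ = 1) (hf : ‖f‖ = 1) (hfx : f x > 1 - δ)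
    (k : ℝ) (hk : k ∈ Set.Ioc (0:ℝ) (1/2)) :
    ∃ y : X, ∃ g : X →L[ℝ] ℝ, ‖y‖ = 1 ∧ ‖g‖ = 1 ∧ g y = 1 ∧
      ‖x - y‖ ≤ δ / k ∧ ‖f - g‖ ≤ 2 * k - 2/3 * k * α :=
  main_lemma_non_square_general X α hα0 hα δ x f hx hf hfx k hk
end
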